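/- For every integer p ≥ 2 there exists a threshold h_p* > 0 such that f_p(h) = 0 for all 0 ≤ h ≤ h_p* and f_p(h) > 0 for all h > h_p*, where f_p(h) := sup over q ∈ [0,1) of { (1/2)log(1-q) + h(q/p)^{p/2} }. -/
import Mathlib


open Real Set

/-- Existence of a positive threshold `h_p*` for the monomial free energy functional
`f_p(h) = sup_{q∈[0,1)} {(1/2)log(1-q) + h (q/p)^{p/2}}`. -/
theorem stmt6 (p : ℕ) (hp : 2 ≤ p) :
    let f : ℝ → ℝ := fun h =>
      sSup ((fun q : ℝ => (1/2) * Real.log (1 - q) + h * (q / p) ^ ((p : ℝ) / 2)) '' Set.Ico 0 1)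
    ∃ hstar : ℝ, 0 < hstar ∧
      (∀ h : ℝ, 0 ≤ h → h ≤ hstar → f h = 0) ∧
      (∀ h : ℝ, hstar < h → 0 < f h) := by
  intro f
  have hp2 : (2:ℝ) ≤ (p:ℝ) := by exact_mod_cast hp
  have hpp : (0:ℝ) < (p:ℝ) := by linarith
  set e : ℝ := (p:ℝ)/2 with he
  have he1 : (1:ℝ) ≤ e := by rw [he]; linarith
  have he0 : e ≠ 0 := by intro h; rw [h] at he1; linarith
  have hc0 : ∀ q : ℝ, 0 ≤ q → (0:ℝ) ≤ (q / (p:ℝ)) ^ e :=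
    fun q hq => Real.rpow_nonneg (div_nonneg hq hpp.le) e
  set S : Set ℝ := {h : ℝ | ∀ q ∈ Set.Ico (0:ℝ) 1,
      (1/2) * Real.log (1 - q) + h * (q / (p:ℝ)) ^ e ≤ 0} with hS
  -- S is downward closed
  have hdown : ∀ h h' : ℝ, h' ≤ h → h ∈ S → h' ∈ S := by
    intro h h' hle hh q hq
    have := hh q hq
    have hmul : h' * (q / (p:ℝ)) ^ e ≤ h * (q / (p:ℝ)) ^ e :=
      mul_le_mul_of_nonneg_right hle (hc0 q hq.1)
    linarith
  -- 1 ∈ S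
  have h1S : (1:ℝ) ∈ S := by
    intro q hq
    obtain ⟨hq0, hq1⟩ := hq
    have hlog : Real.log (1 - q) ≤ -q := by
      have h1q : 0 < 1 - q := by linarith
      have := Real.log_le_sub_one_of_pos h1q
      linarith
    have hpow : (q / (p:ℝ)) ^ e ≤ q / 2 := by
      have hq2 : q / (p:ℝ) ≤ q / 2 := by
        apply div_le_div_of_nonneg_left hq0 (by norm_num) hp2
      rcases eq_or_lt_of_le hq0 with h0 | h0
      · rw [← h0]
        simp [Real.zero_rpow he0]
      · have hb0 : 0 < q / (p:ℝ) := div_pos h0 hpp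
        have hb1 : q / (p:ℝ) ≤ 1 := by
          rw [div_le_one hpp]; linarith
        calc (q / (p:ℝ)) ^ e ≤ (q / (p:ℝ)) ^ (1:ℝ) :=
              Real.rpow_le_rpow_of_exponent_ge hb0 hb1 he1
          _ = q / (p:ℝ) := Real.rpow_one _
          _ ≤ q / 2 := hq2
    have : (1:ℝ) * (q / (p:ℝ)) ^ e ≤ q / 2 := by rw [one_mul]; exact hpow
    nlinarith
  -- S is bounded above
  have hbdd : BddAbove S := by
    set c : ℝ := ((1/2 : ℝ) / (p:ℝ)) ^ e with hc
    have hcpos : 0 < c := Real.rpow_pos_of_pos (div_pos (by norm_num) hpp) e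
    refine ⟨(1/2) * Real.log 2 / c, ?_⟩
    intro h hh
    have := hh (1/2) ⟨by norm_num, by norm_num⟩
    have hlog : Real.log (1 - 1/2) = - Real.log 2 := by
      rw [show (1:ℝ) - 1/2 = 2⁻¹ by norm_num, Real.log_inv]
    rw [hlog] at this
    rw [le_div_iff₀ hcpos]
    linarith
  have hSne : S.Nonempty := ⟨1, h1S⟩
  set hstar : ℝ := sSup S with hhstar
  have h1le : (1:ℝ) ≤ hstar := le_csSup hbdd h1S
  have hstarpos : 0 < hstar := by linarith
  -- hstar ∈ S
  have hstarS : hstar ∈ S := by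
    intro q hq
    obtain ⟨hq0, hq1⟩ := hq
    set A : ℝ := (1/2) * Real.log (1 - q) with hA
    set c : ℝ := (q / (p:ℝ)) ^ e with hc
    have hcn : 0 ≤ c := hc0 q hq0
    have hAle : A ≤ 0 := by
      have : Real.log (1 - q) ≤ 0 :=
        Real.log_nonpos (by linarith) (by linarith)
      rw [hA]; linarith
    by_contra hcon
    push_neg at hcon
    have hcpos : 0 < c := by
      rcases hcn.lt_or_eq with h | h
      · exact h
      · rw [← h] at hcon; simp at hcon; linarith
    have hub : hstar ≤ -A / c := by
      apply csSup_le hSne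
      intro h hh
      have := hh q ⟨hq0, hq1⟩
      rw [le_div_iff₀ hcpos]
      linarith
    rw [le_div_iff₀ hcpos] at hub
    linarith
  -- 0 is in the image for every h
  have hzero : ∀ h : ℝ, (0:ℝ) ∈
      ((fun q : ℝ => (1/2) * Real.log (1 - q) + h * (q / (p:ℝ)) ^ e) '' Set.Ico 0 1) := by
    intro h
    refine ⟨0, ⟨le_refl 0, by norm_num⟩, ?_⟩
    simp [Real.zero_rpow he0]
  refine ⟨hstar, hstarpos, ?_, ?_⟩
  · intro h _ hle
    have hhS : h ∈ S := hdown hstar h hle hstarS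
    have hub : ∀ x ∈ ((fun q : ℝ => (1/2) * Real.log (1 - q) + h * (q / (p:ℝ)) ^ e)
        '' Set.Ico 0 1), x ≤ 0 := by
      rintro x ⟨q, hq, rfl⟩
      exact hhS q hq
    have h1 : f h ≤ 0 := csSup_le ⟨0, hzero h⟩ hub
    have h2 : 0 ≤ f h := le_csSup ⟨0, hub⟩ (hzero h)
    linarith
  · intro h hlt
    have hpos : 0 < h := lt_trans hstarpos hlt
    have hnS : h ∉ S := by
      intro hh
      exact absurd (le_csSup hbdd hh) (not_le.mpr hlt)
    rw [hS] at hnS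
    simp only [Set.mem_setOf_eq] at hnS
    push_neg at hnS
    obtain ⟨q, hq, hqpos⟩ := hnS
    have hbddim : BddAbove ((fun q : ℝ => (1/2) * Real.log (1 - q) + h * (q / (p:ℝ)) ^ e)
        '' Set.Ico 0 1) := by
      refine ⟨h * ((1:ℝ) / (p:ℝ)) ^ e, ?_⟩
      rintro x ⟨r, hr, rfl⟩
      obtain ⟨hr0, hr1⟩ := hr
      have hlog : Real.log (1 - r) ≤ 0 :=
        Real.log_nonpos (by linarith) (by linarith)
      have hpow : (r / (p:ℝ)) ^ e ≤ ((1:ℝ) / (p:ℝ)) ^ e := by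
        apply Real.rpow_le_rpow (div_nonneg hr0 hpp.le)
          (by gcongr <;> linarith) (by positivity)
      have : h * (r / (p:ℝ)) ^ e ≤ h * ((1:ℝ) / (p:ℝ)) ^ e :=
        mul_le_mul_of_nonneg_left hpow hpos.le
      simp only []
      linarith
    have : (1/2) * Real.log (1 - q) + h * (q / (p:ℝ)) ^ e ≤ f h :=
      le_csSup hbddim ⟨q, hq, rfl⟩
    linarith
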